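/- arXiv:cs/0607031 — 2 statements merged into one kernel-verified Lean document; each statement's English description precedes it below -/
import Mathlib

section
/- With the potential φ_v = e^{deg(v) - δ₀} when deg(v) ≥ δ₀ and φ_v = 1/2 otherwise (where δ₀ is a fixed integer threshold), consider degrees d_u, d_v, d_x, d_y with d_u ≥ d_v, d_u ≥ δ₀, and d_u ≥ max(d_x, d_y) + 2. After updating degrees by d_u ← d_u - 1, d_v ← d_v - 1, d_x ← d_x + 1, d_y ← d_y + 1, the sum of the four vertices' potentials decreases by at least 1/2. -/
/-- Potential drop of an edge swap: with `φ(d) = e^{d-δ₀}` for `d ≥ δ₀` and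
`φ(d) = 1/2` otherwise, if `d_u ≥ d_v`, `d_u ≥ δ₀`, `d_u ≥ d_x + 2`,
`d_u ≥ d_y + 2`, then updating `d_u ← d_u - 1`, `d_v ← d_v - 1`,
`d_x ← d_x + 1`, `d_y ← d_y + 1` decreases the total potential by at least
`1/2`. -/
theorem stmt6 (δ₀ : ℤ) (hδ₀ : 0 ≤ δ₀)
    (φ : ℤ → ℝ)
    (hφ : ∀ d : ℤ, φ d = if δ₀ ≤ d then Real.exp (((d - δ₀ : ℤ) : ℝ)) else 1 / 2)
    (du dv dx dy : ℤ) (hdu0 : 0 ≤ du) (hdv0 : 0 ≤ dv) (hdx0 : 0 ≤ dx) (hdy0 : 0 ≤ dy)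
    (huv : dv ≤ du) (huδ : δ₀ ≤ du) (hux : dx + 2 ≤ du) (huy : dy + 2 ≤ du) :
    φ (du - 1) + φ (dv - 1) + φ (dx + 1) + φ (dy + 1) ≤
      (φ du + φ dv + φ dx + φ dy) - 1 / 2 := by
  have hlb : ∀ d : ℤ, 1/2 ≤ φ d := by
    intro d
    rw [hφ]
    split_ifs with h
    · have h0 : (0:ℝ) ≤ ((d - δ₀ : ℤ) : ℝ) := by exact_mod_cast sub_nonneg.mpr h
      linarith [Real.one_le_exp h0]
    · exact le_refl _
  have hmono : ∀ a b : ℤ, a ≤ b → φ a ≤ φ b := by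
    intro a b hab
    rw [hφ, hφ]
    split_ifs with h1 h2 h2
    · exact Real.exp_le_exp.mpr (by exact_mod_cast sub_le_sub_right hab δ₀)
    · exact absurd (h1.trans hab) h2
    · have h0 : (0:ℝ) ≤ ((b - δ₀ : ℤ) : ℝ) := by exact_mod_cast sub_nonneg.mpr h2
      linarith [Real.one_le_exp h0]
    · exact le_refl _
  have hv := hmono (dv - 1) dv (by omega)
  have hexp1 : (2.7:ℝ) < Real.exp 1 := by
    have := Real.exp_one_gt_d9; linarith
  by_cases hc1 : du = δ₀
  · -- du = δ₀
    have e1 : φ du = 1 := by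
      rw [hφ, if_pos huδ]
      norm_num [hc1]
    have e2 : φ (du - 1) = 1/2 := by rw [hφ, if_neg (by omega)]
    have e3 : φ (dx + 1) = 1/2 := by rw [hφ, if_neg (by omega)]
    have e4 : φ dx = 1/2 := by rw [hφ, if_neg (by omega)]
    have e5 : φ (dy + 1) = 1/2 := by rw [hφ, if_neg (by omega)]
    have e6 : φ dy = 1/2 := by rw [hφ, if_neg (by omega)]
    linarith
  by_cases hc2 : du = δ₀ + 1
  · -- du = δ₀ + 1
    have e1 : φ du = Real.exp 1 := by
      rw [hφ, if_pos huδ]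
      congr 1
      push_cast [hc2]; ring
    have e2 : φ (du - 1) = 1 := by
      rw [hφ, if_pos (by omega)]
      have : ((du - 1 - δ₀ : ℤ) : ℝ) = 0 := by push_cast [hc2]; ring
      rw [this, Real.exp_zero]
    have eδ : φ δ₀ = 1 := by
      rw [hφ, if_pos le_rfl]; simp
    have hx1 : φ (dx + 1) ≤ 1 := eδ ▸ hmono (dx + 1) δ₀ (by omega)
    have hy1 : φ (dy + 1) ≤ 1 := eδ ▸ hmono (dy + 1) δ₀ (by omega)
    linarith [hlb dx, hlb dy]
  · -- du ≥ δ₀ + 2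
    have hge : δ₀ + 2 ≤ du := by omega
    set c : ℝ := ((du : ℝ) - δ₀) with hc
    have hc2' : (2:ℝ) ≤ c := by
      rw [hc]; push_cast
      have : ((δ₀:ℝ) + 2) ≤ (du:ℝ) := by exact_mod_cast hge
      linarith
    have e1 : φ du = Real.exp c := by
      rw [hφ, if_pos huδ]; congr 1; push_cast; ring
    have e2 : φ (du - 1) = Real.exp (c - 1) := by
      rw [hφ, if_pos (by omega)]; congr 1; push_cast; ring
    set E : ℝ := Real.exp (c - 1) with hE
    have hEe : Real.exp 1 ≤ E := Real.exp_le_exp.mpr (by linarith)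
    have hEpos : 0 < E := Real.exp_pos _
    have hprod : Real.exp 1 * Real.exp (-1) = 1 := by
      rw [← Real.exp_add]; norm_num
    have hinv : Real.exp (-1) < 1/2 := by
      nlinarith [Real.exp_pos (-1)]
    have hexpnegpos : 0 < Real.exp (-1) := Real.exp_pos _
    -- increase bound
    have hinc : ∀ d : ℤ, d + 1 ≤ du - 1 → φ (d + 1) - φ d ≤ E * (1 - Real.exp (-1)) := by
      intro d hd
      have hexpneg : Real.exp (-1) < 1 := by
        rw [Real.exp_lt_one_iff]; norm_num
      rw [hφ (d+1), hφ d]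
      split_ifs with g1 g2 g2
      · -- both ≥ δ₀
        have key : ((d - δ₀ : ℤ) : ℝ) = ((d + 1 - δ₀ : ℤ) : ℝ) + (-1) := by push_cast; ring
        rw [key, Real.exp_add]
        have hle : Real.exp ((d + 1 - δ₀ : ℤ) : ℝ) ≤ E := by
          rw [hE]
          apply Real.exp_le_exp.mpr
          have : ((d + 1 - δ₀ : ℤ) : ℝ) ≤ ((du - 1 - δ₀ : ℤ) : ℝ) := by
            exact_mod_cast sub_le_sub_right (by omega : d + 1 ≤ du - 1) δ₀
          have hcast : ((du - 1 - δ₀ : ℤ) : ℝ) = c - 1 := by rw [hc]; push_cast; ring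
          linarith
        nlinarith [Real.exp_pos ((d + 1 - δ₀ : ℤ) : ℝ)]
      · -- d + 1 = δ₀
        have hd1 : d + 1 = δ₀ := by omega
        have h0 : ((d + 1 - δ₀ : ℤ) : ℝ) = 0 := by rw [hd1]; push_cast; ring
        rw [h0, Real.exp_zero]
        nlinarith
      · exact absurd (g2.trans (by omega)) g1
      · nlinarith
    have hincx := hinc dx (by omega)
    have hincy := hinc dy (by omega)
    -- main: exp c - E = E(e - 1) etc.
    have hec : Real.exp c = E * Real.exp 1 := by
      rw [hE, ← Real.exp_add]; ring_nf
    have hcoef : (0.4:ℝ) ≤ Real.exp 1 + 2 * Real.exp (-1) - 3 := by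
      nlinarith [hprod, hexp1, Real.exp_pos 1]
    have hkey : (1/2:ℝ) ≤ E * (Real.exp 1 + 2 * Real.exp (-1) - 3) := by
      nlinarith [hEe, hexp1, hcoef]
    rw [e1, e2]
    nlinarith [hv, hincx, hincy, hkey, hec]
end

section
/- Define the rank of an n-vertex tree T as the tuple (t_n, ..., t_1) where t_i is the number of vertices of degree i, ordered lexicographically with higher-degree counts more significant. A swap exchanging tree edge uv for non-tree edge xy, where deg_T(u) ≥ max(deg_T(x), deg_T(y)) + 2 and deg_T(u) ≥ deg_T(v), strictly decreases the rank of the tree. -/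
/-- A swap exchanging tree edge `uv` for non-tree edge `xy` (joining the two
components of `T - uv`), where `deg u ≥ max(deg x, deg y) + 2` and
`deg u ≥ deg v`, strictly decreases the rank `(t_n, ..., t_1)` of the tree in
the lexicographic order (higher-degree counts more significant): for some `j`
the number of degree-`j` vertices strictly drops while the counts for all
degrees above `j` are unchanged. -/
theorem stmt12 {V : Type*} [Fintype V] (T : SimpleGraph V) (hT : T.IsTree)
    (u v x y : V) (huv : T.Adj u v) (hxy : s(x, y) ∉ T.edgeSet)
    (hsep : ¬ (T.deleteEdges {s(u, v)}).Reachable x y)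
    (deg : SimpleGraph V → V → ℕ)
    (hdeg : ∀ (H : SimpleGraph V) (z : V), deg H z = (H.neighborSet z).ncard)
    (hdx : deg T x + 2 ≤ deg T u) (hdy : deg T y + 2 ≤ deg T u)
    (hdv : deg T v ≤ deg T u)
    (T' : SimpleGraph V)
    (hT' : T' = T.deleteEdges {s(u, v)} ⊔ SimpleGraph.fromEdgeSet {s(x, y)}) :
    ∃ j : ℕ, {z : V | deg T' z = j}.ncard < {z : V | deg T z = j}.ncard ∧
      ∀ i : ℕ, j < i → {z : V | deg T' z = i}.ncard = {z : V | deg T z = i}.ncard := by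
  classical
  have hune_v : u ≠ v := huv.ne
  have hxney : x ≠ y := by
    rintro rfl; exact hsep (SimpleGraph.Reachable.refl x)
  have hux : u ≠ x := by rintro rfl; omega
  have huy : u ≠ y := by rintro rfl; omega
  have hnadjxy : ¬ T.Adj x y := by rwa [← SimpleGraph.mem_edgeSet]
  -- adjacency in T'
  have hadj : ∀ a b : V, T'.Adj a b ↔
      (T.Adj a b ∧ ¬((a = u ∧ b = v) ∨ (a = v ∧ b = u))) ∨
      ((a = x ∧ b = y) ∨ (a = y ∧ b = x)) := by
    intro a b
    subst hT'
    simp only [SimpleGraph.sup_adj, SimpleGraph.deleteEdges_adj, Set.mem_singleton_iff,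
      SimpleGraph.fromEdgeSet_adj, Sym2.eq, Sym2.rel_iff', Prod.mk.injEq, Prod.swap_prod_mk]
    constructor
    · rintro (⟨h1, h2⟩ | ⟨h1, -⟩)
      · exact Or.inl ⟨h1, h2⟩
      · exact Or.inr h1
    · rintro (⟨h1, h2⟩ | h1)
      · exact Or.inl ⟨h1, h2⟩
      · refine Or.inr ⟨h1, ?_⟩
        rcases h1 with ⟨rfl, rfl⟩ | ⟨rfl, rfl⟩
        · exact hxney
        · exact hxney.symm
  set d := deg T u with hd
  have hd2 : 2 ≤ d := by omega
  have hmemv : v ∈ T.neighborSet u := huv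
  have hmemu : u ∈ T.neighborSet v := huv.symm
  -- degree of u drops by one
  have hNu : T'.neighborSet u = T.neighborSet u \ {v} := by
    ext w
    simp only [SimpleGraph.mem_neighborSet, hadj, Set.mem_diff, Set.mem_singleton_iff]
    tauto
  have hdegu' : deg T' u = d - 1 := by
    rw [hdeg, hNu, Set.ncard_diff_singleton_of_mem hmemv, hd, hdeg]
  -- key lemma
  have key : ∀ z : V, deg T' z = deg T z ∨ (deg T' z < d ∧ deg T z ≤ d) := by
    intro z
    by_cases hzu : z = u
    · subst hzu
      right
      constructor
      · rw [hdegu']; omega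
      · omega
    by_cases hzx : z = x
    · subst hzx
      by_cases hzv : z = v
      · -- z = v : loses u, gains y; degree unchanged
        left
        have hNx : T'.neighborSet z = insert y (T.neighborSet z \ {u}) := by
          ext w
          simp only [SimpleGraph.mem_neighborSet, hadj, Set.mem_insert_iff, Set.mem_diff,
            Set.mem_singleton_iff]
          tauto
        have hyni : y ∉ T.neighborSet z \ {u} := by
          rintro ⟨h1, -⟩
          exact hnadjxy h1
        have humem : u ∈ T.neighborSet z := by
          rw [hzv]; exact hmemu
        rw [hdeg, hNx, Set.ncard_insert_of_notMem hyni,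
          Set.ncard_diff_singleton_of_mem humem, hdeg]
        have h1 : 0 < (T.neighborSet z).ncard :=
          (Set.ncard_pos (Set.toFinite _)).mpr ⟨u, humem⟩
        omega
      · -- z ∉ {u, v} : gains y
        right
        have hNx : T'.neighborSet z = insert y (T.neighborSet z) := by
          ext w
          simp only [SimpleGraph.mem_neighborSet, hadj, Set.mem_insert_iff]
          tauto
        have hyn : y ∉ T.neighborSet z := hnadjxy
        have : deg T' z = deg T z + 1 := by
          rw [hdeg, hNx, Set.ncard_insert_of_notMem hyn, hdeg]
        omega
    by_cases hzy : z = y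
    · subst hzy
      by_cases hzv : z = v
      · left
        have hNy : T'.neighborSet z = insert x (T.neighborSet z \ {u}) := by
          ext w
          simp only [SimpleGraph.mem_neighborSet, hadj, Set.mem_insert_iff, Set.mem_diff,
            Set.mem_singleton_iff]
          tauto
        have hxni : x ∉ T.neighborSet z \ {u} := by
          rintro ⟨h1, -⟩
          exact hnadjxy h1.symm
        have humem : u ∈ T.neighborSet z := by
          rw [hzv]; exact hmemu
        rw [hdeg, hNy, Set.ncard_insert_of_notMem hxni,
          Set.ncard_diff_singleton_of_mem humem, hdeg]
        have h1 : 0 < (T.neighborSet z).ncard :=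
          (Set.ncard_pos (Set.toFinite _)).mpr ⟨u, humem⟩
        omega
      · right
        have hNy : T'.neighborSet z = insert x (T.neighborSet z) := by
          ext w
          simp only [SimpleGraph.mem_neighborSet, hadj, Set.mem_insert_iff]
          tauto
        have hxn : x ∉ T.neighborSet z := fun h => hnadjxy h.symm
        have : deg T' z = deg T z + 1 := by
          rw [hdeg, hNy, Set.ncard_insert_of_notMem hxn, hdeg]
        omega
    by_cases hzv : z = v
    · subst hzv
      right
      have hNv : T'.neighborSet z = T.neighborSet z \ {u} := by
        ext w
        simp only [SimpleGraph.mem_neighborSet, hadj, Set.mem_diff, Set.mem_singleton_iff]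
        tauto
      have hdv' : deg T' z = deg T z - 1 := by
        rw [hdeg, hNv, Set.ncard_diff_singleton_of_mem hmemu, hdeg]
      have h1 : 1 ≤ deg T z := by
        rw [hdeg]
        have : (T.neighborSet z).Nonempty := ⟨u, hmemu⟩
        have := (Set.ncard_pos (Set.toFinite _)).mpr this
        omega
      omega
    · left
      have hNz : T'.neighborSet z = T.neighborSet z := by
        ext w
        simp only [SimpleGraph.mem_neighborSet, hadj]
        tauto
      rw [hdeg, hNz, hdeg]
  -- conclude
  refine ⟨d, ?_, ?_⟩
  · have hsub : {z : V | deg T' z = d} ⊆ {z : V | deg T z = d} := by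
      intro z hz
      simp only [Set.mem_setOf_eq] at hz ⊢
      rcases key z with h | ⟨h1, -⟩
      · omega
      · omega
    have hss : {z : V | deg T' z = d} ⊂ {z : V | deg T z = d} := by
      rw [Set.ssubset_iff_of_subset hsub]
      refine ⟨u, ?_, ?_⟩
      · simp only [Set.mem_setOf_eq]
        exact hd.symm
      · simp only [Set.mem_setOf_eq]
        rw [hdegu']
        omega
    exact Set.ncard_lt_ncard hss (Set.toFinite _)
  · intro i hi
    congr 1
    ext z
    simp only [Set.mem_setOf_eq]
    rcases key z with h | ⟨h1, h2⟩
    · rw [h]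
    · constructor
      · intro hh; omega
      · intro hh; omega
end
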